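/- arXiv:2407.15198 — 3 statements merged into one kernel-verified Lean document; each statement's English description precedes it below -/
import Mathlib

section
/- In the Strings and Coins game played on a path graph (a tree), the first player can capture every vertex; more generally, on any finite tree (every vertex attached to at least one edge), the first player wins by capturing all vertices. -/
/-- A position in Strings and Coins: a finite multigraph, with vertex set `verts`
and a multiset of (possibly loop) edges, each given as an ordered pair. -/
structure SCPos (V : Type) where
  verts : Finset V
  edges : Multiset (V × V)

variable {V : Type} [DecidableEq V]

/-- Number of edges incident to `v` (each edge, including a loop, counted once);
only being zero or nonzero matters for captures. -/
def SCPos.deg (p : SCPos V) (v : V) : ℕ :=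
  (p.edges.filter (fun f => f.1 = v ∨ f.2 = v)).card

/-- Degree of `v`, where a loop at `v` contributes 2. -/
def SCPos.degree (p : SCPos V) (v : V) : ℕ :=
  (p.edges.map (fun e => (if e.1 = v then 1 else 0) + (if e.2 = v then 1 else 0))).sum

/-- The position obtained by removing one copy of edge `e`. -/
def SCPos.remove (p : SCPos V) (e : V × V) : SCPos V :=
  ⟨p.verts, p.edges.erase e⟩

/-- The number of vertices captured by removing edge `e` from `p`:
endpoints of `e` whose degree drops to zero. -/
def SCPos.caps (p : SCPos V) (e : V × V) : ℕ :=
  (p.verts.filter (fun v => (v = e.1 ∨ v = e.2) ∧ (p.remove e).deg v = 0)).card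

/-- Optimal score `(mover's points, opponent's points)` of Strings and Coins,
under play where each player maximizes their own number of captured vertices.
A player who captures at least one vertex moves again. -/
noncomputable def SCPos.score (p : SCPos V) : ℕ × ℕ :=
  if h : p.edges = 0 then (0, 0)
  else
    (p.edges.toList.attach.map (fun ⟨e, he⟩ =>
      let s := (p.remove e).score
      let c := p.caps e
      if c = 0 then (s.2, s.1) else (s.1 + c, s.2))).foldl
      (fun best o => if best.1 ≤ o.1 then o else best) (0, 0)
termination_by p.edges.card
decreasing_by
  exact Multiset.card_erase_lt_of_mem (Multiset.mem_toList.mp he)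

/-- The cycle graph `C_n` as a Strings and Coins position. -/
def cyclePos (n : ℕ) : SCPos ℕ :=
  ⟨Finset.range n, ((List.range n).map (fun i => (i, (i + 1) % n)) : List (ℕ × ℕ))⟩

/-- The friendship graph `F_n`: `n` triangles sharing the common vertex `0`. -/
def friendshipPos (n : ℕ) : SCPos ℕ :=
  ⟨Finset.range (2 * n + 1),
   (((List.range n).flatMap fun i =>
      [(0, 2 * i + 1), (0, 2 * i + 2), (2 * i + 1, 2 * i + 2)]) : List (ℕ × ℕ))⟩

/-- The pinwheel graph `PW_n`: `n` copies of `C_4` sharing the common vertex `0`. -/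
def pinwheelPos (n : ℕ) : SCPos ℕ :=
  ⟨Finset.range (3 * n + 1),
   (((List.range n).flatMap fun i =>
      [(0, 3 * i + 1), (3 * i + 1, 3 * i + 2), (3 * i + 2, 3 * i + 3), (3 * i + 3, 0)]) :
     List (ℕ × ℕ))⟩

/-- The loopy star `L_n`: center `0`, outer vertices `1, …, n`, each joined to the
center by an edge and carrying one loop. -/
def loopyStarPos (n : ℕ) : SCPos ℕ :=
  ⟨Finset.range (n + 1),
   (((List.range n).flatMap fun i => [(0, i + 1), (i + 1, i + 1)]) : List (ℕ × ℕ))⟩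

/-- The double loopy star `L(n,2)`: center `0`, outer vertices `1, …, n`, each joined
to the center by an edge and carrying two loops. -/
def doubleLoopyStarPos (n : ℕ) : SCPos ℕ :=
  ⟨Finset.range (n + 1),
   (((List.range n).flatMap fun i => [(0, i + 1), (i + 1, i + 1), (i + 1, i + 1)]) :
     List (ℕ × ℕ))⟩

/-- The complete bipartite graph `K(1, b)` (a star with `b` leaves). -/
def starPos (b : ℕ) : SCPos ℕ :=
  ⟨Finset.range (b + 1), (((List.range b).map fun i => (0, i + 1)) : List (ℕ × ℕ))⟩

/-- The complete bipartite graph `K(2, b)`: part `{0, 1}` and part `{2, …, b+1}`. -/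
def k2bPos (b : ℕ) : SCPos ℕ :=
  ⟨Finset.range (b + 2),
   (((List.range b).flatMap fun j => [(0, j + 2), (1, j + 2)]) : List (ℕ × ℕ))⟩

/-- The balloon path `BP_n`: a path on vertices `0, …, n-1` with one loop at each vertex. -/
def balloonPathPos (n : ℕ) : SCPos ℕ :=
  ⟨Finset.range n,
   ((((List.range (n - 1)).map fun i => (i, i + 1)) ++
     ((List.range n).map fun i => (i, i))) : List (ℕ × ℕ))⟩

/-- The loopy cycle `C_(n,1)`: the cycle `C_n` with one extra loop at vertex `0`. -/
def loopyCyclePos (n : ℕ) : SCPos ℕ :=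
  ⟨Finset.range n, (0, 0) ::ₘ (cyclePos n).edges⟩

/-- The Strings and Coins position of a finite simple graph: all vertices,
and one (arbitrarily oriented) edge for each edge of the graph. -/
noncomputable def posOfGraph {W : Type} [Fintype W] [DecidableEq W]
    (G : SimpleGraph W) [DecidableRel G.Adj] : SCPos W :=
  ⟨Finset.univ, G.edgeFinset.val.map Quot.out⟩

/-!
Each move removes one edge, and a vertex is captured at most once, so the two players together
never score more than the number of non-isolated vertices. In a forest with an edge, the edge at a
leaf captures that leaf, and what remains is again a forest; so the first player can capture on
every move, keeps the turn until the board is empty, and takes every vertex, all of which are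
non-isolated in a tree with at least two vertices.
-/

open Finset

section MaxFst

variable {α β : Type*} [LinearOrder α]

def maxFst (a b : α × β) : α × β := if a.1 ≤ b.1 then b else a

theorem foldl_maxFst_eq_or_mem (l : List (α × β)) (init : α × β) :
    l.foldl maxFst init = init ∨ l.foldl maxFst init ∈ l := by
  induction l generalizing init with
  | nil => simp
  | cons b l ih =>
    rcases ih (maxFst init b) with h | h
    · rw [List.foldl_cons, h]
      unfold maxFst
      split <;> simp
    · exact Or.inr (List.mem_cons_of_mem _ h)

theorem fst_le_foldl_maxFst {l : List (α × β)} {init o : α × β} (ho : o ∈ init :: l) :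
    o.1 ≤ (l.foldl maxFst init).1 := by
  induction l generalizing init o with
  | nil => simp_all
  | cons b l ih =>
    have hstep : o.1 ≤ (maxFst init b).1 ∨ o ∈ l := by
      unfold maxFst
      simp only [List.mem_cons] at ho
      rcases ho with rfl | rfl | ho <;> split <;> grind
    rw [List.foldl_cons]
    rcases hstep with h | h
    · exact h.trans (ih List.mem_cons_self)
    · exact ih (List.mem_cons_of_mem _ h)

end MaxFst

namespace SCPos

noncomputable def moveValue (p : SCPos V) (e : V × V) : ℕ × ℕ :=
  if p.caps e = 0 then ((p.remove e).score.2, (p.remove e).score.1)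
  else ((p.remove e).score.1 + p.caps e, (p.remove e).score.2)

theorem score_of_edges_eq_zero {p : SCPos V} (h : p.edges = 0) : p.score = (0, 0) := by
  rw [score, dif_pos h]

theorem score_eq_foldl {p : SCPos V} (h : p.edges ≠ 0) :
    p.score = (p.edges.toList.map p.moveValue).foldl maxFst (0, 0) := by
  rw [score, dif_neg h, ← List.attach_map_val (l := p.edges.toList)]
  rfl

theorem score_eq_zero_or_exists_moveValue (p : SCPos V) :
    p.score = (0, 0) ∨ ∃ e ∈ p.edges, p.score = p.moveValue e := by
  by_cases h : p.edges = 0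
  · exact Or.inl (score_of_edges_eq_zero h)
  · rw [score_eq_foldl h]
    refine (foldl_maxFst_eq_or_mem _ _).imp_right fun hmem => ?_
    obtain ⟨e, he, hval⟩ := List.mem_map.1 hmem
    exact ⟨e, Multiset.mem_toList.1 he, hval.symm⟩

theorem moveValue_fst_le_score_fst {p : SCPos V} {e : V × V} (he : e ∈ p.edges) :
    (p.moveValue e).1 ≤ p.score.1 := by
  rw [score_eq_foldl (ne_of_mem_of_not_mem' he (Multiset.notMem_zero e))]
  exact fst_le_foldl_maxFst <|
    List.mem_cons_of_mem _ <| List.mem_map_of_mem (Multiset.mem_toList.2 he)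

theorem moveValue_fst_add_snd (p : SCPos V) (e : V × V) :
    (p.moveValue e).1 + (p.moveValue e).2 =
      (p.remove e).score.1 + (p.remove e).score.2 + p.caps e := by
  unfold moveValue
  split <;> simp only [*] <;> omega

theorem moveValue_of_caps_ne_zero {p : SCPos V} {e : V × V} (h : p.caps e ≠ 0) :
    p.moveValue e = ((p.remove e).score.1 + p.caps e, (p.remove e).score.2) :=
  if_neg h

theorem deg_remove {p : SCPos V} {e : V × V} (he : e ∈ p.edges) (v : V) :
    (p.remove e).deg v = p.deg v - if e.1 = v ∨ e.2 = v then 1 else 0 := by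
  obtain ⟨t, ht⟩ := Multiset.exists_cons_of_mem he
  simp only [deg, remove, ht, Multiset.erase_cons_head, Multiset.filter_cons]
  split <;> simp

theorem deg_ne_zero_of_mem {p : SCPos V} {e : V × V} (he : e ∈ p.edges) {v : V}
    (hv : e.1 = v ∨ e.2 = v) : p.deg v ≠ 0 :=
  (Multiset.card_pos_iff_exists_mem.2 ⟨e, Multiset.mem_filter.2 ⟨he, hv⟩⟩).ne'

def liveVerts (p : SCPos V) : Finset V := {v ∈ p.verts | p.deg v ≠ 0}

theorem liveVerts_of_edges_eq_zero {p : SCPos V} (h : p.edges = 0) : p.liveVerts = ∅ := by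
  simp [liveVerts, deg, h]

theorem card_liveVerts_remove_add_caps {p : SCPos V} {e : V × V} (he : e ∈ p.edges) :
    #(p.remove e).liveVerts + p.caps e = #p.liveVerts := by
  rw [liveVerts, liveVerts, caps, ← card_union_of_disjoint]
  · congr 1
    ext v
    simp only [mem_union, mem_filter, deg_remove he]
    by_cases hinc : e.1 = v ∨ e.2 = v
    · have := deg_ne_zero_of_mem he hinc
      simp only [hinc, if_true]
      tauto
    · simp only [hinc, if_false]
      tauto
  · exact disjoint_filter.2 fun _ _ h1 h2 => h1 h2.2

theorem score_fst_add_snd_le (p : SCPos V) : p.score.1 + p.score.2 ≤ #p.liveVerts := by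
  rcases p.score_eq_zero_or_exists_moveValue with h | ⟨e, he, h⟩
  · simp [h]
  · have := score_fst_add_snd_le (p.remove e)
    rw [h, moveValue_fst_add_snd, ← card_liveVerts_remove_add_caps he]
    omega
termination_by p.edges.card
decreasing_by exact Multiset.card_erase_lt_of_mem he

inductive ClearableByCaptures : SCPos V → Prop
  | of_edges_eq_zero {p : SCPos V} : p.edges = 0 → ClearableByCaptures p
  | remove {p : SCPos V} {e : V × V} : e ∈ p.edges → p.caps e ≠ 0 →
      ClearableByCaptures (p.remove e) → ClearableByCaptures p

theorem ClearableByCaptures.score_eq {p : SCPos V} (h : ClearableByCaptures p) :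
    p.score = (#p.liveVerts, 0) := by
  induction h with
  | of_edges_eq_zero h => rw [score_of_edges_eq_zero h, liveVerts_of_edges_eq_zero h, card_empty]
  | @remove p e he hcaps _ ih =>
    have hmove : p.moveValue e = (#p.liveVerts, 0) := by
      rw [moveValue_of_caps_ne_zero hcaps, ih, ← card_liveVerts_remove_add_caps he]
    have hle := moveValue_fst_le_score_fst he
    have hsum := p.score_fst_add_snd_le
    rw [hmove] at hle
    ext <;> simp only at hle ⊢ <;> omega

end SCPos

theorem Sym2.out_fst_eq_or_out_snd_eq_iff {α : Type*} {s : Sym2 α} {v : α} :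
    s.out.1 = v ∨ s.out.2 = v ↔ v ∈ s := by
  have h : s(s.out.1, s.out.2) = s := Quot.out_eq s
  conv_rhs => rw [← h, Sym2.mem_iff]
  tauto

theorem SimpleGraph.IsAcyclic.exists_adj_forall_adj_eq {W : Type*} [Finite W]
    {G : SimpleGraph W} (hG : G.IsAcyclic) {a b : W} (hab : G.Adj a b) :
    ∃ u w, G.Adj u w ∧ ∀ x, G.Adj u x → x = w := by
  have : Nonempty W := ⟨a⟩
  obtain ⟨u, v, p, hp, hmax⟩ := SimpleGraph.Walk.exists_isPath_forall_isPath_length_le_length G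
  have hnil : ¬ p.Nil := fun hnil => by
    have := hmax a b (.cons hab .nil) (by simp [hab.ne])
    simp [SimpleGraph.Walk.length_eq_zero_iff.2 hnil] at this
  refine ⟨u, p.snd, p.adj_snd hnil, fun x hx => hG.eq_snd_of_adj_start hp hx ?_⟩
  -- otherwise `x` would extend the longest path
  by_contra hx'
  have := hmax x v (.cons hx.symm p) (hp.cons hx')
  simp at this

namespace SCPos

theorem caps_ne_zero_of_deg_eq_one {p : SCPos V} {e : V × V} (he : e ∈ p.edges) {v : V}
    (hv : v ∈ p.verts) (hinc : e.1 = v ∨ e.2 = v) (hdeg : p.deg v = 1) : p.caps e ≠ 0 := by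
  refine (card_pos.2 ⟨v, mem_filter.2 ⟨hv, ?_, ?_⟩⟩).ne'
  · exact hinc.imp Eq.symm Eq.symm
  · rw [deg_remove he, if_pos hinc, hdeg]

variable [Fintype V]

noncomputable def ofEdges (E : Finset (Sym2 V)) : SCPos V :=
  ⟨univ, E.val.map Quot.out⟩

theorem posOfGraph_eq_ofEdges (G : SimpleGraph V) [DecidableRel G.Adj] :
    posOfGraph G = ofEdges G.edgeFinset :=
  rfl

omit [DecidableEq V] in
theorem out_mem_ofEdges {E : Finset (Sym2 V)} {s : Sym2 V} (hs : s ∈ E) :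
    s.out ∈ (ofEdges E).edges :=
  Multiset.mem_map_of_mem _ hs

theorem ofEdges_remove_out {E : Finset (Sym2 V)} {s : Sym2 V} :
    (ofEdges E).remove s.out = ofEdges (E.erase s) := by
  simp only [ofEdges, remove, erase_val,
    Multiset.map_erase _ (Function.LeftInverse.injective Quot.out_eq)]

theorem deg_ofEdges (E : Finset (Sym2 V)) (v : V) : (ofEdges E).deg v = #{s ∈ E | v ∈ s} := by
  simp only [deg, ofEdges, Multiset.filter_map, Multiset.card_map, Function.comp_def,
    Sym2.out_fst_eq_or_out_snd_eq_iff]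
  rfl

theorem clearableByCaptures_ofEdges (E : Finset (Sym2 V)) (H : SimpleGraph V)
    (hH : H.IsAcyclic) (hE : H.edgeSet = E) : ClearableByCaptures (ofEdges E) := by
  induction E using Finset.strongInduction generalizing H with
  | H E ih =>
  rcases E.eq_empty_or_nonempty with rfl | ⟨s, hs⟩
  · exact .of_edges_eq_zero rfl
  have hadj {x y : V} : H.Adj x y ↔ s(x, y) ∈ E := by
    rw [← SimpleGraph.mem_edgeSet, hE, mem_coe]
  induction s using Sym2.ind with | _ a b =>
  obtain ⟨u, w, huw, hleaf⟩ := hH.exists_adj_forall_adj_eq (hadj.2 hs)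
  have hmem : s(u, w) ∈ E := hadj.1 huw
  have hdeg : (ofEdges E).deg u = 1 := by
    rw [deg_ofEdges, card_eq_one]
    refine ⟨s(u, w), ext fun t => ⟨fun ht => ?_, fun ht => ?_⟩⟩
    · obtain ⟨ht, hu⟩ := mem_filter.1 ht
      obtain ⟨x, rfl⟩ := Sym2.mem_iff_exists.1 hu
      rw [mem_singleton, hleaf x (hadj.2 ht)]
    · rw [mem_singleton.1 ht]
      exact mem_filter.2 ⟨hmem, Sym2.mem_mk_left u w⟩
  have hout := out_mem_ofEdges hmem
  refine .remove hout (caps_ne_zero_of_deg_eq_one hout (mem_univ u)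
    (Sym2.out_fst_eq_or_out_snd_eq_iff.2 (Sym2.mem_mk_left u w)) hdeg) ?_
  rw [ofEdges_remove_out]
  exact ih _ (erase_ssubset hmem) (H.deleteEdges {s(u, w)}) (hH.anti (H.deleteEdges_le _))
    (by rw [SimpleGraph.edgeSet_deleteEdges, hE, coe_erase])

theorem clearableByCaptures_posOfGraph {G : SimpleGraph V} [DecidableRel G.Adj]
    (hG : G.IsAcyclic) : ClearableByCaptures (posOfGraph G) :=
  clearableByCaptures_ofEdges _ G hG G.coe_edgeFinset.symm

theorem deg_posOfGraph (G : SimpleGraph V) [DecidableRel G.Adj] (v : V) :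
    (posOfGraph G).deg v = G.degree v := by
  rw [posOfGraph_eq_ofEdges, deg_ofEdges, ← G.incidenceFinset_eq_filter,
    G.card_incidenceFinset_eq_degree]

theorem liveVerts_posOfGraph [Nontrivial V] {G : SimpleGraph V} [DecidableRel G.Adj]
    (hG : G.Preconnected) : (posOfGraph G).liveVerts = univ :=
  filter_true_of_mem fun v _ => by
    rw [deg_posOfGraph]
    exact (hG.degree_pos_of_nontrivial v).ne'

end SCPos

/-- On any finite tree (connected, acyclic, at least 2 vertices, so every vertex
meets an edge), the first player wins Strings and Coins by capturing every vertex. -/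
theorem stmt0 {V : Type} [Fintype V] [DecidableEq V] (G : SimpleGraph V)
    [DecidableRel G.Adj] (hT : G.IsTree) (h2 : 2 ≤ Fintype.card V) :
    (posOfGraph G).score = (Fintype.card V, 0) := by
  have : Nontrivial V := Fintype.one_lt_card_iff_nontrivial.1 h2
  rw [(SCPos.clearableByCaptures_posOfGraph hT.isAcyclic).score_eq,
    SCPos.liveVerts_posOfGraph hT.connected.preconnected, Finset.card_univ]
end

section
/- If a finite multigraph G is a second-player win in Strings and Coins, then the graph G' obtained from G by attaching a single loop to an existing vertex of G is a first-player win. -/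
variable {V : Type} [DecidableEq V]

/-!
The two optimal scores of a position add up to its number of uncaptured vertices. Let `G'` be
`G` with the loop at `v` attached. Taking that loop first captures nothing, since `v` keeps an
edge of `G`, and hands `G` to the opponent; so the first player of `G'` secures the second
player's score in `G`. Since `G` and `G'` have the same uncaptured vertices, the second player
of `G'` is in turn held to the first player's score in `G`, which is the smaller one.
-/

section ArgmaxFold

variable {α β : Type*} [LinearOrder β] (f : α → β)

theorem List.foldl_argmax_mem_cons (b : α) (l : List α) :
    l.foldl (fun best o => if f best ≤ f o then o else best) b ∈ b :: l := by
  induction l generalizing b with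
  | nil => simp
  | cons o t ih =>
    rcases List.mem_cons.mp (ih (if f b ≤ f o then o else b)) with h | h
    · rw [List.foldl_cons, h]; split <;> simp
    · simp [h]

theorem List.le_foldl_argmax (b : α) (l : List α) :
    f b ≤ f (l.foldl (fun best o => if f best ≤ f o then o else best) b) := by
  induction l generalizing b with
  | nil => exact le_rfl
  | cons o t ih =>
    refine le_trans ?_ (ih _)
    beta_reduce
    split <;> order

theorem List.le_foldl_argmax_of_mem (b : α) {l : List α} {o : α} (ho : o ∈ l) :
    f o ≤ f (l.foldl (fun best o => if f best ≤ f o then o else best) b) := by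
  induction l generalizing b with
  | nil => simp at ho
  | cons a t ih =>
    rcases List.mem_cons.mp ho with rfl | h
    · refine le_trans ?_ (List.le_foldl_argmax f _ t)
      beta_reduce
      split <;> order
    · exact ih _ h

end ArgmaxFold

namespace SCPos

variable {V : Type} [DecidableEq V]

def numUncaptured (p : SCPos V) : ℕ := (p.verts.filter (fun v => p.deg v ≠ 0)).card

/-- The entry of the list in `score` for the opening move `e`: a move that captures
nothing passes the turn, so the two components swap. -/
noncomputable def moveOutcome (p : SCPos V) (e : V × V) : ℕ × ℕ :=
  if p.caps e = 0 then ((p.remove e).score.2, (p.remove e).score.1)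
  else ((p.remove e).score.1 + p.caps e, (p.remove e).score.2)

theorem score_of_edges_ne_zero (p : SCPos V) (h : p.edges ≠ 0) :
    p.score = (p.edges.toList.map p.moveOutcome).foldl
      (fun best o => if best.1 ≤ o.1 then o else best) (0, 0) := by
  rw [score, dif_neg h, ← List.attach_map_val (f := p.moveOutcome)]
  rfl

theorem exists_mem_edges_score_eq (p : SCPos V) (h : p.edges ≠ 0) :
    ∃ e ∈ p.edges, p.score = p.moveOutcome e := by
  have hne : p.edges.toList.map p.moveOutcome ≠ [] := by simpa using h
  obtain ⟨o, t, hot⟩ := List.exists_cons_of_ne_nil hne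
  have hmem : p.score ∈ p.edges.toList.map p.moveOutcome := by
    rw [score_of_edges_ne_zero p h, hot, List.foldl_cons, if_pos (Nat.zero_le _)]
    exact List.foldl_argmax_mem_cons Prod.fst o t
  obtain ⟨e, he, heq⟩ := List.mem_map.mp hmem
  exact ⟨e, Multiset.mem_toList.mp he, heq.symm⟩

theorem moveOutcome_fst_le_score_fst (p : SCPos V) {e : V × V} (he : e ∈ p.edges) :
    (p.moveOutcome e).1 ≤ p.score.1 := by
  rw [score_of_edges_ne_zero p fun h0 => Multiset.notMem_zero e (h0 ▸ he)]
  exact List.le_foldl_argmax_of_mem Prod.fst _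
    (List.mem_map_of_mem (Multiset.mem_toList.mpr he))

theorem deg_eq_deg_remove_add (p : SCPos V) {e : V × V} (he : e ∈ p.edges) (w : V) :
    p.deg w = (p.remove e).deg w + if e.1 = w ∨ e.2 = w then 1 else 0 := by
  unfold remove deg
  conv_lhs => rw [← Multiset.cons_erase he]
  rw [Multiset.filter_cons]
  split <;> simp [add_comm]

theorem deg_ne_zero_iff_of_mem (p : SCPos V) {e : V × V} (he : e ∈ p.edges) (w : V) :
    p.deg w ≠ 0 ↔ (p.remove e).deg w ≠ 0 ∨ (w = e.1 ∨ w = e.2) := by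
  rw [deg_eq_deg_remove_add p he w]
  split <;> grind

theorem numUncaptured_eq_add_caps (p : SCPos V) {e : V × V} (he : e ∈ p.edges) :
    p.numUncaptured = (p.remove e).numUncaptured + p.caps e := by
  unfold numUncaptured caps
  rw [← Finset.card_union_of_disjoint]
  · congr 1
    ext w
    simp only [Finset.mem_union, Finset.mem_filter, deg_ne_zero_iff_of_mem p he w]
    exact ⟨by tauto, by rintro (⟨hw, h⟩ | ⟨hw, h, -⟩) <;> tauto⟩
  · exact Finset.disjoint_filter.mpr fun _ _ h h' => h h'.2

theorem score_fst_add_score_snd (p : SCPos V) :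
    p.score.1 + p.score.2 = p.numUncaptured := by
  induction h : p.edges.card using Nat.strong_induction_on generalizing p with
  | _ n ih =>
  by_cases h0 : p.edges = 0
  · have hdeg (v : V) : p.deg v = 0 := by simp [deg, h0]
    simp [score, h0, numUncaptured, hdeg]
  · obtain ⟨e, he, hscore⟩ := exists_mem_edges_score_eq p h0
    have ih' := ih _ (h ▸ Multiset.card_erase_lt_of_mem he) (p.remove e) rfl
    have hN := numUncaptured_eq_add_caps p he
    rw [hscore, moveOutcome]
    split <;> dsimp only <;> omega

theorem score_remove_snd_le_score_fst (p : SCPos V) {e : V × V} (he : e ∈ p.edges)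
    (hc : p.caps e = 0) : (p.remove e).score.2 ≤ p.score.1 := by
  simpa [moveOutcome, hc] using p.moveOutcome_fst_le_score_fst he

theorem score_snd_le_score_remove_fst (p : SCPos V) {e : V × V} (he : e ∈ p.edges)
    (hc : p.caps e = 0) : p.score.2 ≤ (p.remove e).score.1 := by
  have hle := p.score_remove_snd_le_score_fst he hc
  have hsum := p.score_fst_add_score_snd
  have hsum' := (p.remove e).score_fst_add_score_snd
  have hN := numUncaptured_eq_add_caps p he
  omega

theorem caps_eq_zero_of_deg_remove_ne_zero (p : SCPos V) {e : V × V}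
    (h₁ : (p.remove e).deg e.1 ≠ 0) (h₂ : (p.remove e).deg e.2 ≠ 0) : p.caps e = 0 := by
  refine Finset.card_eq_zero.mpr (Finset.filter_eq_empty_iff.mpr ?_)
  rintro w - ⟨rfl | rfl, h⟩ <;> contradiction

theorem remove_mk_cons (vs : Finset V) (e : V × V) (es : Multiset (V × V)) :
    (SCPos.mk vs (e ::ₘ es)).remove e = ⟨vs, es⟩ := by
  simp [remove]

theorem deg_ne_zero_of_degree_pos (p : SCPos V) {v : V} (h : 0 < p.degree v) :
    p.deg v ≠ 0 := by
  intro h0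
  have hnot : ∀ e ∈ p.edges, e.1 ≠ v ∧ e.2 ≠ v := by
    simpa [deg, Multiset.filter_eq_nil, not_or] using h0
  have : p.degree v = 0 :=
    Multiset.sum_eq_zero fun x hx => by
      obtain ⟨e, he, rfl⟩ := Multiset.mem_map.mp hx
      simp [(hnot e he).1, (hnot e he).2]
  omega

end SCPos

/-- If a finite multigraph `G` (every vertex of nonzero degree, as in a valid
starting position) is a second-player win, then attaching a single loop to an
existing vertex yields a first-player win. -/
theorem stmt3 {V : Type} [DecidableEq V] (G : SCPos V)
    (hpos : ∀ v ∈ G.verts, 0 < G.degree v)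
    (hG : (G.score).1 < (G.score).2) (v : V) (hv : v ∈ G.verts) :
    ((SCPos.mk G.verts ((v, v) ::ₘ G.edges)).score).2
      < ((SCPos.mk G.verts ((v, v) ::ₘ G.edges)).score).1 := by
  set G' : SCPos V := ⟨G.verts, (v, v) ::ₘ G.edges⟩
  have hloop : (v, v) ∈ G'.edges := Multiset.mem_cons_self _ _
  have hremove : G'.remove (v, v) = G := SCPos.remove_mk_cons _ _ _
  have hdeg : (G'.remove (v, v)).deg v ≠ 0 := hremove ▸ G.deg_ne_zero_of_degree_pos (hpos v hv)
  have hcaps : G'.caps (v, v) = 0 := G'.caps_eq_zero_of_deg_remove_ne_zero hdeg hdeg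
  calc G'.score.2 ≤ G.score.1 := hremove ▸ G'.score_snd_le_score_remove_fst hloop hcaps
    _ < G.score.2 := hG
    _ ≤ G'.score.1 := hremove ▸ G'.score_remove_snd_le_score_fst hloop hcaps
end

section
/- In Strings and Coins on the loopy star L_n (a star with center c, n leaves each joined to c by one edge and each carrying one loop), the optimal score satisfies the recurrence: if L_{n-1} has optimal score (x, y), then L_n has optimal score (y, x+1). Consequently Player 1 wins by exactly 2 points when the total number of vertices n+1 is even, and Player 2 wins by exactly 3 points when n+1 is odd. -/
variable {V : Type} [DecidableEq V]

/-- Value of the option of removing edge `e` from `p`. -/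
noncomputable def optval (p : SCPos V) (e : V × V) : ℕ × ℕ :=
  if p.caps e = 0 then ((p.remove e).score.2, (p.remove e).score.1)
  else ((p.remove e).score.1 + p.caps e, (p.remove e).score.2)

lemma foldpick (v : ℕ × ℕ) :
    ∀ (l : List (ℕ × ℕ)), (∀ o ∈ l, o.1 < v.1 ∨ o = v) →
      ∀ init : ℕ × ℕ, init.1 ≤ v.1 → (v ∈ l ∨ init = v) →
      l.foldl (fun best o => if best.1 ≤ o.1 then o else best) init = v := by
  intro l
  induction l with
  | nil =>
    intro _ init _ h
    simpa using h
  | cons o l ih =>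
    intro hall init hle hmem
    simp only [List.foldl_cons]
    rcases hall o (by simp) with ho | ho
    · -- o.1 < v.1 : keep going
      have h1 : (if init.1 ≤ o.1 then o else init).1 ≤ v.1 := by
        split <;> omega
      apply ih (fun x hx => hall x (by simp [hx])) _ h1
      rcases hmem with hv | hv
      · rcases List.mem_cons.mp hv with rfl | hv
        · omega
        · exact Or.inl hv
      · right
        rw [← hv] at ho ⊢
        rw [if_neg (by omega)]
    · subst ho
      have : init.1 ≤ o.1 := hle
      simp only [if_pos this]
      exact ih (fun x hx => hall x (by simp [hx])) o le_rfl (Or.inr rfl)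

lemma score_eq (p : SCPos V) (v : ℕ × ℕ) (hne : p.edges ≠ 0)
    (hub : ∀ e ∈ p.edges, (optval p e).1 < v.1 ∨ optval p e = v)
    (hmem : ∃ e ∈ p.edges, optval p e = v) : p.score = v := by
  rw [SCPos.score, dif_neg hne]
  apply foldpick
  · intro o ho
    simp only [List.mem_map, List.mem_attach, true_and, Subtype.exists] at ho
    obtain ⟨e, he, rfl⟩ := ho
    have he' : e ∈ p.edges := Multiset.mem_toList.mp he
    exact hub e he'
  · exact Nat.zero_le _
  · left
    obtain ⟨e, he, hv⟩ := hmem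
    have he' : e ∈ p.edges.toList := Multiset.mem_toList.mpr he
    refine List.mem_map.mpr ⟨⟨e, he'⟩, List.mem_attach _ _, ?_⟩
    simpa [optval] using hv



/-! ### loopy-star states -/

def sval (a b s : ℕ) : ℕ × ℕ :=
  if s = 0 then (if a = 0 then (b, 0) else (a + b + 1, 0))
  else if s % 2 = 1 then (a + b + (s + 3) / 2, (s - 1) / 2)
  else (a + b + s / 2 - 1, s / 2 + 2)

lemma svalA (a b s : ℕ) (ha : 1 ≤ a) :
    ((sval (a-1) b s).1 + ((if a - 1 + s = 0 then 1 else 0) + 1), (sval (a-1) b s).2)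
      = sval a b s := by
  simp only [sval, Prod.ext_iff]; split_ifs <;> simp_all <;> omega

lemma svalB (a b s : ℕ) (hb : 1 ≤ b) :
    ((sval a (b-1) s).1 + 1, (sval a (b-1) s).2) = sval a b s := by
  simp only [sval, Prod.ext_iff]; split_ifs <;> simp_all <;> omega

lemma svalSl (a b s : ℕ) (hs : 1 ≤ s) :
    ((sval (a+1) b (s-1)).2, (sval (a+1) b (s-1)).1).1 < (sval a b s).1 ∨
    ((sval (a+1) b (s-1)).2, (sval (a+1) b (s-1)).1) = sval a b s := by
  simp only [sval, Prod.ext_iff]; split_ifs <;> simp_all <;> omega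

lemma svalSl_eq (s : ℕ) (hs : 2 ≤ s) :
    ((sval 1 0 (s-1)).2, (sval 1 0 (s-1)).1) = sval 0 0 s := by
  simp only [sval, Prod.ext_iff]; split_ifs <;> simp_all <;> omega

lemma svalSs_swap (a b s : ℕ) (hs : 1 ≤ s) :
    ((sval a (b+1) (s-1)).2, (sval a (b+1) (s-1)).1).1 < (sval a b s).1 ∨
    ((sval a (b+1) (s-1)).2, (sval a (b+1) (s-1)).1) = sval a b s := by
  simp only [sval, Prod.ext_iff]; split_ifs <;> simp_all <;> omega

lemma svalSs_cap (b : ℕ) :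
    ((sval 0 (b+1) 0).1 + 1, (sval 0 (b+1) 0).2) = sval 0 b 1 := by
  simp only [sval, Prod.ext_iff]; split_ifs <;> simp_all

def strE (M : Multiset ℕ) : Multiset (ℕ × ℕ) := M.map fun x => (0, x)
def lpE (M : Multiset ℕ) : Multiset (ℕ × ℕ) := M.map fun x => (x, x)

lemma str_inj : Function.Injective (fun x : ℕ => ((0 : ℕ), x)) := fun a b h => by
  simpa using congrArg Prod.snd h

lemma lp_inj : Function.Injective (fun x : ℕ => (x, x)) := fun a b h => by
  simpa using congrArg Prod.fst h

/-- The canonical loopy-star state: vertex set `W` (containing the centre `0`),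
leaves in `A` have only a string, leaves in `B` have only a loop, leaves in `S`
have both. -/
def starP (W A B S : Finset ℕ) : SCPos ℕ :=
  ⟨W, strE (A.val + S.val) + lpE (B.val + S.val)⟩

lemma deg0_eq (W : Finset ℕ) (M N : Multiset ℕ) (hN : ∀ y ∈ N, y ≠ 0) :
    SCPos.deg ⟨W, strE M + lpE N⟩ 0 = Multiset.card M := by
  unfold SCPos.deg strE lpE
  rw [Multiset.filter_add, Multiset.filter_map, Multiset.filter_map]
  rw [Multiset.filter_eq_self.2 (fun a _ => by simp), Multiset.filter_eq_nil.2 ?_]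
  · simp
  · intro y hy
    simpa using hN y hy

lemma degx_zero (W : Finset ℕ) (M N : Multiset ℕ) {x : ℕ} (hx : x ≠ 0)
    (hxM : x ∉ M) (hxN : x ∉ N) :
    SCPos.deg ⟨W, strE M + lpE N⟩ x = 0 := by
  unfold SCPos.deg strE lpE
  rw [Multiset.card_eq_zero, Multiset.filter_eq_nil]
  intro f hf
  simp only [Multiset.mem_add, Multiset.mem_map] at hf
  rcases hf with ⟨y, hy, rfl⟩ | ⟨y, hy, rfl⟩
  · simp only [not_or]
    exact ⟨fun h => hx h.symm, fun h => hxM (h ▸ hy)⟩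
  · simp only [or_self]
    exact fun h => hxN (h ▸ hy)

lemma degx_ne (W : Finset ℕ) (M N : Multiset ℕ) {x : ℕ}
    (h : x ∈ M ∨ x ∈ N) :
    SCPos.deg ⟨W, strE M + lpE N⟩ x ≠ 0 := by
  unfold SCPos.deg strE lpE
  rw [Ne, Multiset.card_eq_zero, Multiset.filter_eq_nil]
  push_neg
  rcases h with h | h
  · exact ⟨(0, x), Multiset.mem_add.mpr (Or.inl (Multiset.mem_map.mpr ⟨x, h, rfl⟩)),
      Or.inr rfl⟩
  · exact ⟨(x, x), Multiset.mem_add.mpr (Or.inr (Multiset.mem_map.mpr ⟨x, h, rfl⟩)),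
      Or.inr rfl⟩

lemma card_filter_single (W : Finset ℕ) {x : ℕ} (hx : x ∈ W) (D : ℕ → Prop)
    [DecidablePred D] :
    (W.filter fun v => (v = x ∨ v = x) ∧ D v).card = if D x then 1 else 0 := by
  have h : (W.filter fun v => (v = x ∨ v = x) ∧ D v) = if D x then {x} else ∅ := by
    split_ifs with h <;> ext v <;> simp only [Finset.mem_filter, Finset.mem_singleton,
      Finset.notMem_empty, or_self, iff_false, not_and] <;> aesop
  rw [h]; split_ifs <;> simp

lemma card_filter_pair (W : Finset ℕ) {x y : ℕ} (hxy : x ≠ y) (hx : x ∈ W) (hy : y ∈ W)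
    (D : ℕ → Prop) [DecidablePred D] :
    (W.filter fun v => (v = x ∨ v = y) ∧ D v).card
      = (if D x then 1 else 0) + (if D y then 1 else 0) := by
  have h : (W.filter fun v => (v = x ∨ v = y) ∧ D v)
      = (if D x then {x} else ∅) ∪ (if D y then {y} else ∅) := by
    split_ifs with h1 h2 h2 <;> ext v <;>
      simp only [Finset.mem_filter, Finset.mem_union, Finset.mem_singleton,
        Finset.notMem_empty, Finset.mem_insert, or_false, false_or] <;> aesop
  rw [h]
  split_ifs with h1 h2 h2
  · rw [Finset.card_union_of_disjoint (by simp [Ne.symm hxy, hxy])]; simp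
  all_goals simp

lemma val_shuffle {x : ℕ} {B S : Finset ℕ} (hxB : x ∉ B) (hxS : x ∈ S) :
    B.val + S.val = (insert x B).val + (S.erase x).val := by
  rw [Finset.insert_val_of_notMem hxB, Finset.erase_val,
    ← Multiset.cons_erase (show x ∈ S.val from hxS)]
  simp [Multiset.add_cons, Multiset.cons_add]


lemma strE_erase (M : Multiset ℕ) (x : ℕ) : strE (M.erase x) = (strE M).erase (0, x) := by
  simpa [strE] using Multiset.map_erase (fun y : ℕ => ((0 : ℕ), y)) str_inj x M

lemma lpE_erase (M : Multiset ℕ) (x : ℕ) : lpE (M.erase x) = (lpE M).erase (x, x) := by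
  simpa [lpE] using Multiset.map_erase (fun y : ℕ => (y, y)) lp_inj x M

lemma remove_A {W A B S : Finset ℕ} {x : ℕ} (hx : x ∈ A) :
    (starP W A B S).remove (0, x) = starP W (A.erase x) B S := by
  unfold SCPos.remove starP
  congr 1
  have h1 : ((0 : ℕ), x) ∈ strE (A.val + S.val) :=
    Multiset.mem_map.mpr ⟨x, by simp [hx], rfl⟩
  rw [Multiset.erase_add_left_pos _ h1, ← strE_erase,
    Multiset.erase_add_left_pos _ (show x ∈ A.val from hx), ← Finset.erase_val]

lemma remove_B {W A B S : Finset ℕ} {x : ℕ} (hx : x ∈ B) :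
    (starP W A B S).remove (x, x) = starP W A (B.erase x) S := by
  unfold SCPos.remove starP
  congr 1
  have h1 : (x, x) ∈ lpE (B.val + S.val) :=
    Multiset.mem_map.mpr ⟨x, by simp [hx], rfl⟩
  rw [Multiset.erase_add_right_pos _ h1, ← lpE_erase,
    Multiset.erase_add_left_pos _ (show x ∈ B.val from hx), ← Finset.erase_val]

lemma remove_Ss {W A B S : Finset ℕ} {x : ℕ} (hx : x ∈ S) (hxB : x ∉ B) :
    (starP W A B S).remove (0, x) = starP W A (insert x B) (S.erase x) := by
  unfold SCPos.remove starP
  congr 1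
  have h1 : ((0 : ℕ), x) ∈ strE (A.val + S.val) :=
    Multiset.mem_map.mpr ⟨x, by simp [hx], rfl⟩
  rw [Multiset.erase_add_left_pos _ h1, ← strE_erase,
    Multiset.erase_add_right_pos _ (show x ∈ S.val from hx), ← Finset.erase_val,
    ← val_shuffle hxB hx]

lemma remove_Sl {W A B S : Finset ℕ} {x : ℕ} (hx : x ∈ S) (hxA : x ∉ A) :
    (starP W A B S).remove (x, x) = starP W (insert x A) B (S.erase x) := by
  unfold SCPos.remove starP
  congr 1
  have h1 : (x, x) ∈ lpE (B.val + S.val) :=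
    Multiset.mem_map.mpr ⟨x, by simp [hx], rfl⟩
  rw [Multiset.erase_add_right_pos _ h1, ← lpE_erase,
    Multiset.erase_add_right_pos _ (show x ∈ S.val from hx), ← Finset.erase_val,
    ← val_shuffle hxA hx]

lemma starP_verts (W A B S : Finset ℕ) : (starP W A B S).verts = W := rfl

lemma deg0_starP (W A B S : Finset ℕ) (hN : ∀ y ∈ B ∪ S, y ≠ 0) :
    SCPos.deg (starP W A B S) 0 = A.card + S.card := by
  unfold starP
  rw [deg0_eq]
  · rw [Multiset.card_add]; rfl
  · intro y hy
    rw [Multiset.mem_add] at hy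
    exact hN y (Finset.mem_union.mpr (hy.imp Finset.mem_val.mp Finset.mem_val.mp))

lemma degx_zero_starP (W A B S : Finset ℕ) {x : ℕ} (hx0 : x ≠ 0)
    (hA : x ∉ A) (hB : x ∉ B) (hS : x ∉ S) :
    SCPos.deg (starP W A B S) x = 0 := by
  unfold starP
  exact degx_zero W _ _ hx0 (by simp [hA, hS]) (by simp [hB, hS])

lemma degx_ne_starP (W A B S : Finset ℕ) {x : ℕ} (h : x ∈ A ∨ x ∈ B ∨ x ∈ S) :
    SCPos.deg (starP W A B S) x ≠ 0 := by
  unfold starP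
  apply degx_ne
  rcases h with h | h | h
  · exact Or.inl (by simp [h])
  · exact Or.inr (by simp [h])
  · exact Or.inl (by simp [h])

lemma caps_A {W A B S : Finset ℕ} {x : ℕ} (hx : x ∈ A) (h0 : 0 ∈ W) (hxW : x ∈ W)
    (hx0 : x ≠ 0) (hxB : x ∉ B) (hxS : x ∉ S) (hN : ∀ y ∈ B ∪ S, y ≠ 0) :
    (starP W A B S).caps (0, x)
      = (if (A.erase x).card + S.card = 0 then 1 else 0) + 1 := by
  simp only [SCPos.caps, remove_A hx, starP_verts]
  rw [card_filter_pair W (Ne.symm hx0) h0 hxW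
    (fun v => SCPos.deg (starP W (A.erase x) B S) v = 0)]
  rw [deg0_starP _ _ _ _ hN,
    degx_zero_starP W (A.erase x) B S hx0 (by simp) hxB hxS]
  simp

lemma caps_B {W A B S : Finset ℕ} {x : ℕ} (hx : x ∈ B) (hxW : x ∈ W)
    (hx0 : x ≠ 0) (hxA : x ∉ A) (hxS : x ∉ S) :
    (starP W A B S).caps (x, x) = 1 := by
  simp only [SCPos.caps, remove_B hx, starP_verts]
  rw [card_filter_single W hxW (fun v => SCPos.deg (starP W A (B.erase x) S) v = 0)]
  rw [degx_zero_starP W A (B.erase x) S hx0 hxA (by simp) hxS]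
  simp

lemma caps_Sl {W A B S : Finset ℕ} {x : ℕ} (hx : x ∈ S) (hxW : x ∈ W) (hxA : x ∉ A) :
    (starP W A B S).caps (x, x) = 0 := by
  simp only [SCPos.caps, remove_Sl hx hxA, starP_verts]
  rw [card_filter_single W hxW
    (fun v => SCPos.deg (starP W (insert x A) B (S.erase x)) v = 0)]
  rw [if_neg (degx_ne_starP _ _ _ _ (Or.inl (Finset.mem_insert_self x A)))]

lemma caps_Ss {W A B S : Finset ℕ} {x : ℕ} (hx : x ∈ S) (h0 : 0 ∈ W) (hxW : x ∈ W)
    (hx0 : x ≠ 0) (hxB : x ∉ B) (hN : ∀ y ∈ (insert x B) ∪ (S.erase x), y ≠ 0) :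
    (starP W A B S).caps (0, x)
      = if A.card + (S.erase x).card = 0 then 1 else 0 := by
  simp only [SCPos.caps, remove_Ss hx hxB, starP_verts]
  rw [card_filter_pair W (Ne.symm hx0) h0 hxW
    (fun v => SCPos.deg (starP W A (insert x B) (S.erase x)) v = 0)]
  rw [deg0_starP _ _ _ _ hN,
    if_neg (degx_ne_starP _ _ _ _ (Or.inr (Or.inl (Finset.mem_insert_self x B))))]
  simp


lemma optval_A {W A B S : Finset ℕ} {x : ℕ} (hx : x ∈ A) (h0 : 0 ∈ W) (hxW : x ∈ W)
    (hx0 : x ≠ 0) (hxB : x ∉ B) (hxS : x ∉ S) (hN : ∀ y ∈ B ∪ S, y ≠ 0)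
    (IH : (starP W (A.erase x) B S).score = sval (A.card - 1) B.card S.card) :
    optval (starP W A B S) (0, x) = sval A.card B.card S.card := by
  unfold optval
  rw [caps_A hx h0 hxW hx0 hxB hxS hN, remove_A hx, IH]
  rw [if_neg (show ¬((if (A.erase x).card + S.card = 0 then 1 else 0) + 1 = 0) by simp)]
  rw [Finset.card_erase_of_mem hx]
  exact svalA _ _ _ (Finset.card_pos.mpr ⟨x, hx⟩)

lemma optval_B {W A B S : Finset ℕ} {x : ℕ} (hx : x ∈ B) (hxW : x ∈ W)
    (hx0 : x ≠ 0) (hxA : x ∉ A) (hxS : x ∉ S)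
    (IH : (starP W A (B.erase x) S).score = sval A.card (B.card - 1) S.card) :
    optval (starP W A B S) (x, x) = sval A.card B.card S.card := by
  unfold optval
  rw [caps_B hx hxW hx0 hxA hxS, remove_B hx, IH, if_neg one_ne_zero]
  exact svalB _ _ _ (Finset.card_pos.mpr ⟨x, hx⟩)

lemma optval_Sl {W A B S : Finset ℕ} {x : ℕ} (hx : x ∈ S) (hxW : x ∈ W) (hxA : x ∉ A)
    (IH : (starP W (insert x A) B (S.erase x)).score
      = sval (A.card + 1) B.card (S.card - 1)) :
    optval (starP W A B S) (x, x)
      = ((sval (A.card + 1) B.card (S.card - 1)).2,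
         (sval (A.card + 1) B.card (S.card - 1)).1) := by
  unfold optval
  rw [caps_Sl hx hxW hxA, remove_Sl hx hxA, IH, if_pos rfl]

lemma optval_Ss {W A B S : Finset ℕ} {x : ℕ} (hx : x ∈ S) (h0 : 0 ∈ W) (hxW : x ∈ W)
    (hx0 : x ≠ 0) (hxB : x ∉ B) (hN : ∀ y ∈ (insert x B) ∪ (S.erase x), y ≠ 0)
    (IH : (starP W A (insert x B) (S.erase x)).score
      = sval A.card (B.card + 1) (S.card - 1)) :
    optval (starP W A B S) (0, x)
      = if A.card + (S.card - 1) = 0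
        then ((sval A.card (B.card + 1) (S.card - 1)).1 + 1,
              (sval A.card (B.card + 1) (S.card - 1)).2)
        else ((sval A.card (B.card + 1) (S.card - 1)).2,
              (sval A.card (B.card + 1) (S.card - 1)).1) := by
  unfold optval
  rw [caps_Ss hx h0 hxW hx0 hxB hN, remove_Ss hx hxB, IH,
    Finset.card_erase_of_mem hx]
  by_cases hc : A.card + (S.card - 1) = 0
  · rw [if_pos hc, if_neg (by simp [hc]), if_pos hc]
  · rw [if_neg hc, if_pos (by simp [hc]), if_neg hc]

lemma mem_edges_str {W A B S : Finset ℕ} {x : ℕ} (h : x ∈ A ∨ x ∈ S) :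
    (0, x) ∈ (starP W A B S).edges :=
  Multiset.mem_add.mpr (Or.inl (Multiset.mem_map.mpr
    ⟨x, Multiset.mem_add.mpr (h.imp Finset.mem_val.mpr Finset.mem_val.mpr), rfl⟩))

lemma mem_edges_lp {W A B S : Finset ℕ} {x : ℕ} (h : x ∈ B ∨ x ∈ S) :
    (x, x) ∈ (starP W A B S).edges :=
  Multiset.mem_add.mpr (Or.inr (Multiset.mem_map.mpr
    ⟨x, Multiset.mem_add.mpr (h.imp Finset.mem_val.mpr Finset.mem_val.mpr), rfl⟩))

lemma starP_edges_ne {W A B S : Finset ℕ} (h : ¬(A = ∅ ∧ B = ∅ ∧ S = ∅)) :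
    (starP W A B S).edges ≠ 0 := by
  intro h0
  apply h
  refine ⟨?_, ?_, ?_⟩ <;> rw [Finset.eq_empty_iff_forall_notMem] <;> intro x hx
  · exact Multiset.notMem_zero _ (h0 ▸ mem_edges_str (W := W) (B := B) (S := S) (Or.inl hx))
  · exact Multiset.notMem_zero _ (h0 ▸ mem_edges_lp (W := W) (A := A) (S := S) (Or.inl hx))
  · exact Multiset.notMem_zero _ (h0 ▸ mem_edges_str (W := W) (A := A) (B := B) (Or.inr hx))


lemma starP_empty_score (W : Finset ℕ) : (starP W ∅ ∅ ∅).score = (0, 0) := by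
  rw [SCPos.score, dif_pos (show (starP W ∅ ∅ ∅).edges = 0 by simp [starP, strE, lpE])]

lemma star_score : ∀ (k : ℕ) (W A B S : Finset ℕ),
    A.card + B.card + 2 * S.card ≤ k → 0 ∈ W →
    (∀ y ∈ A ∪ B ∪ S, y ∈ W ∧ y ≠ 0) →
    Disjoint A B → Disjoint A S → Disjoint B S →
    (starP W A B S).score = sval A.card B.card S.card := by
  intro k
  induction k with
  | zero =>
    intro W A B S hk _ _ _ _ _
    have hA : A = ∅ := Finset.card_eq_zero.mp (by omega)
    have hB : B = ∅ := Finset.card_eq_zero.mp (by omega)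
    have hS : S = ∅ := Finset.card_eq_zero.mp (by omega)
    subst hA; subst hB; subst hS
    rw [starP_empty_score]
    rfl
  | succ k ih =>
    intro W A B S hk h0 hW hAB hAS hBS
    by_cases hemp : A = ∅ ∧ B = ∅ ∧ S = ∅
    · obtain ⟨rfl, rfl, rfl⟩ := hemp
      rw [starP_empty_score]
      rfl
    · -- basic membership facts helper
      have hWA : ∀ y ∈ A, y ∈ W ∧ y ≠ 0 := fun y hy => hW y (by simp [hy])
      have hWB : ∀ y ∈ B, y ∈ W ∧ y ≠ 0 := fun y hy => hW y (by simp [hy])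
      have hWS : ∀ y ∈ S, y ∈ W ∧ y ≠ 0 := fun y hy => hW y (by simp [hy])
      have hN : ∀ y ∈ B ∪ S, y ≠ 0 := fun y hy => (hW y (by
        rcases Finset.mem_union.mp hy with h | h <;> simp [h])).2
      -- the four option computations, packaged
      have hoptA : ∀ x ∈ A, optval (starP W A B S) (0, x) = sval A.card B.card S.card := by
        intro x hx
        obtain ⟨hxW, hx0⟩ := hWA x hx
        have hxB : x ∉ B := Finset.disjoint_left.mp hAB hx
        have hxS : x ∉ S := Finset.disjoint_left.mp hAS hx
        have hm : (A.erase x).card + B.card + 2 * S.card ≤ k := by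
          have h1 : (A.erase x).card = A.card - 1 := Finset.card_erase_of_mem hx
          have h2 : 1 ≤ A.card := Finset.card_pos.mpr ⟨x, hx⟩
          omega
        have IH := ih W (A.erase x) B S hm h0
          (fun y hy => hW y (by
            simp only [Finset.mem_union, Finset.mem_erase] at hy ⊢; tauto))
          (Finset.disjoint_of_subset_left (Finset.erase_subset _ _) hAB)
          (Finset.disjoint_of_subset_left (Finset.erase_subset _ _) hAS) hBS
        rw [Finset.card_erase_of_mem hx] at IH
        exact optval_A hx h0 hxW hx0 hxB hxS hN IH
      have hoptB : ∀ x ∈ B, optval (starP W A B S) (x, x) = sval A.card B.card S.card := by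
        intro x hx
        obtain ⟨hxW, hx0⟩ := hWB x hx
        have hxA : x ∉ A := Finset.disjoint_right.mp hAB hx
        have hxS : x ∉ S := Finset.disjoint_left.mp hBS hx
        have hm : A.card + (B.erase x).card + 2 * S.card ≤ k := by
          have h1 : (B.erase x).card = B.card - 1 := Finset.card_erase_of_mem hx
          have h2 : 1 ≤ B.card := Finset.card_pos.mpr ⟨x, hx⟩
          omega
        have IH := ih W A (B.erase x) S hm h0
          (fun y hy => hW y (by
            simp only [Finset.mem_union, Finset.mem_erase] at hy ⊢; tauto))
          (Finset.disjoint_of_subset_right (Finset.erase_subset _ _) hAB) hAS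
          (Finset.disjoint_of_subset_left (Finset.erase_subset _ _) hBS)
        rw [Finset.card_erase_of_mem hx] at IH
        exact optval_B hx hxW hx0 hxA hxS IH
      have hoptSl : ∀ x ∈ S, optval (starP W A B S) (x, x)
          = ((sval (A.card + 1) B.card (S.card - 1)).2,
             (sval (A.card + 1) B.card (S.card - 1)).1) := by
        intro x hx
        obtain ⟨hxW, hx0⟩ := hWS x hx
        have hxA : x ∉ A := Finset.disjoint_right.mp hAS hx
        have hxB : x ∉ B := Finset.disjoint_right.mp hBS hx
        have hm : (insert x A).card + B.card + 2 * (S.erase x).card ≤ k := by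
          have h1 : (S.erase x).card = S.card - 1 := Finset.card_erase_of_mem hx
          have h2 : 1 ≤ S.card := Finset.card_pos.mpr ⟨x, hx⟩
          have h3 : (insert x A).card = A.card + 1 := Finset.card_insert_of_notMem hxA
          omega
        have IH := ih W (insert x A) B (S.erase x) hm h0
          (fun y hy => hW y (by
            simp only [Finset.mem_union, Finset.mem_erase, Finset.mem_insert] at hy ⊢
            rcases hy with ((rfl | h) | h) | ⟨hne, h⟩ <;> tauto))
          (by rw [Finset.disjoint_left]
              intro y hy
              rcases Finset.mem_insert.mp hy with rfl | hy
              · exact hxB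
              · exact Finset.disjoint_left.mp hAB hy)
          (by rw [Finset.disjoint_left]
              intro y hy
              rcases Finset.mem_insert.mp hy with rfl | hy
              · simp
              · intro hc
                exact Finset.disjoint_left.mp hAS hy (Finset.mem_of_mem_erase hc))
          (Finset.disjoint_of_subset_right (Finset.erase_subset _ _) hBS)
        rw [Finset.card_erase_of_mem hx, Finset.card_insert_of_notMem hxA] at IH
        exact optval_Sl hx hxW hxA IH
      have hoptSs : ∀ x ∈ S, optval (starP W A B S) (0, x)
          = if A.card + (S.card - 1) = 0
            then ((sval A.card (B.card + 1) (S.card - 1)).1 + 1,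
                  (sval A.card (B.card + 1) (S.card - 1)).2)
            else ((sval A.card (B.card + 1) (S.card - 1)).2,
                  (sval A.card (B.card + 1) (S.card - 1)).1) := by
        intro x hx
        obtain ⟨hxW, hx0⟩ := hWS x hx
        have hxA : x ∉ A := Finset.disjoint_right.mp hAS hx
        have hxB : x ∉ B := Finset.disjoint_right.mp hBS hx
        have hN' : ∀ y ∈ (insert x B) ∪ (S.erase x), y ≠ 0 := by
          intro y hy
          simp only [Finset.mem_union, Finset.mem_insert, Finset.mem_erase] at hy
          rcases hy with (rfl | h) | h
          · exact hx0
          · exact (hWB y h).2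
          · exact (hWS y h.2).2
        have hm : A.card + (insert x B).card + 2 * (S.erase x).card ≤ k := by
          have h1 : (S.erase x).card = S.card - 1 := Finset.card_erase_of_mem hx
          have h2 : 1 ≤ S.card := Finset.card_pos.mpr ⟨x, hx⟩
          have h3 : (insert x B).card = B.card + 1 := Finset.card_insert_of_notMem hxB
          omega
        have IH := ih W A (insert x B) (S.erase x) hm h0
          (fun y hy => hW y (by
            simp only [Finset.mem_union, Finset.mem_erase, Finset.mem_insert] at hy ⊢
            rcases hy with (h | (rfl | h)) | ⟨hne, h⟩ <;> tauto))
          (by rw [Finset.disjoint_right]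
              intro y hy
              rcases Finset.mem_insert.mp hy with rfl | hy
              · exact hxA
              · exact Finset.disjoint_right.mp hAB hy)
          (Finset.disjoint_of_subset_right (Finset.erase_subset _ _) hAS)
          (by rw [Finset.disjoint_left]
              intro y hy
              rcases Finset.mem_insert.mp hy with rfl | hy
              · simp
              · intro hc
                exact Finset.disjoint_left.mp hBS hy (Finset.mem_of_mem_erase hc))
        rw [Finset.card_erase_of_mem hx, Finset.card_insert_of_notMem hxB] at IH
        exact optval_Ss hx h0 hxW hx0 hxB hN' IH
      -- now conclude via score_eq
      apply score_eq _ _ (starP_edges_ne hemp)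
      · -- every option is dominated
        intro e he
        rcases Multiset.mem_add.mp he with he' | he'
        · obtain ⟨y, hy, rfl⟩ := Multiset.mem_map.mp he'
          rcases Multiset.mem_add.mp hy with hyA | hyS
          · exact Or.inr (hoptA y hyA)
          · rw [hoptSs y hyS]
            by_cases hc : A.card + (S.card - 1) = 0
            · rw [if_pos hc]
              right
              have hS1 : 1 ≤ S.card := Finset.card_pos.mpr ⟨y, hyS⟩
              have hc1 : A.card = 0 := by omega
              have hc2 : S.card = 1 := by omega
              rw [hc1, hc2]
              exact svalSs_cap B.card
            · rw [if_neg hc]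
              exact svalSs_swap _ _ _ (Finset.card_pos.mpr ⟨y, hyS⟩)
        · obtain ⟨y, hy, rfl⟩ := Multiset.mem_map.mp he'
          rcases Multiset.mem_add.mp hy with hyB | hyS
          · exact Or.inr (hoptB y hyB)
          · rw [hoptSl y hyS]
            exact svalSl _ _ _ (Finset.card_pos.mpr ⟨y, hyS⟩)
      · -- some option attains the value
        by_cases hA : A.Nonempty
        · obtain ⟨x, hx⟩ := hA
          exact ⟨(0, x), mem_edges_str (Or.inl hx), hoptA x hx⟩
        · by_cases hB : B.Nonempty
          · obtain ⟨x, hx⟩ := hB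
            exact ⟨(x, x), mem_edges_lp (Or.inl hx), hoptB x hx⟩
          · have hS : S.Nonempty := by
              rcases Finset.eq_empty_or_nonempty S with rfl | h
              · exact absurd ⟨Finset.not_nonempty_iff_eq_empty.mp hA,
                  Finset.not_nonempty_iff_eq_empty.mp hB, rfl⟩ hemp
              · exact h
            obtain ⟨x, hx⟩ := hS
            have hA0 : A.card = 0 := by simp [Finset.not_nonempty_iff_eq_empty.mp hA]
            have hB0 : B.card = 0 := by simp [Finset.not_nonempty_iff_eq_empty.mp hB]
            by_cases hS1 : S.card = 1
            · refine ⟨(0, x), mem_edges_str (Or.inr hx), ?_⟩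
              rw [hoptSs x hx, if_pos (by omega), hA0, hB0, hS1]
              exact svalSs_cap 0
            · refine ⟨(x, x), mem_edges_lp (Or.inr hx), ?_⟩
              rw [hoptSl x hx, hA0, hB0]
              have hS2 : 2 ≤ S.card := by
                have : 1 ≤ S.card := Finset.card_pos.mpr ⟨x, hx⟩
                omega
              simpa using svalSl_eq S.card hS2


/-- The outer vertices of the loopy star. -/
def Sn (n : ℕ) : Finset ℕ := Finset.image (fun i => i + 1) (Finset.range n)

lemma Sn_card (n : ℕ) : (Sn n).card = n := by
  rw [Sn, Finset.card_image_of_injective _ (fun a b h => by omega), Finset.card_range]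

lemma loopy_edges (n : ℕ) :
    ((List.range n).flatMap (fun i => [(0, i + 1), (i + 1, i + 1)]) : Multiset (ℕ × ℕ))
      = strE ((∅ : Finset ℕ).val + (Sn n).val) + lpE ((∅ : Finset ℕ).val + (Sn n).val) := by
  induction n with
  | zero => simp [Sn, strE, lpE]
  | succ n ihn =>
    have hv : (Sn (n + 1)).val = (n + 1) ::ₘ (Sn n).val := by
      rw [Sn, Finset.range_add_one, Finset.image_insert,
        Finset.insert_val_of_notMem (by simp [Sn])]
      rfl
    rw [List.range_succ, List.flatMap_append, ← Multiset.coe_add, ihn, hv]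
    simp only [strE, lpE, Finset.empty_val, zero_add, Multiset.map_cons,
      List.flatMap_cons, List.flatMap_nil, List.append_nil]
    rw [show ((([(0, n + 1), (n + 1, n + 1)] : List (ℕ × ℕ))) : Multiset (ℕ × ℕ))
        = (0, n + 1) ::ₘ (n + 1, n + 1) ::ₘ 0 from rfl]
    simp only [Multiset.add_cons, Multiset.cons_add, Multiset.cons_swap]
    simp

lemma loopy_eq (n : ℕ) :
    loopyStarPos n = starP (Finset.range (n + 1)) ∅ ∅ (Sn n) := by
  unfold loopyStarPos starP
  congr 1
  exact loopy_edges n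

lemma loopy_score (n : ℕ) : (loopyStarPos n).score = sval 0 0 n := by
  rw [loopy_eq n]
  have h := star_score (2 * n) (Finset.range (n + 1)) ∅ ∅ (Sn n)
    (by rw [Sn_card]; simp)
    (by simp)
    (by intro y hy
        simp only [Finset.union_idempotent, Finset.empty_union, Sn,
          Finset.mem_image, Finset.mem_range] at hy
        obtain ⟨i, hi, rfl⟩ := hy
        constructor
        · simp only [Finset.mem_range]; omega
        · omega)
    (by simp) (by simp) (by simp)
  rw [h, Sn_card]
  simp

/-- Loopy stars: if `L_{n-1}` has optimal score `(x, y)`, then `L_n` has optimal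
score `(y, x + 1)`; consequently Player 1 wins by exactly 2 points when the number
of vertices `n + 1` is even, and Player 2 wins by exactly 3 points when `n + 1`
is odd. -/
theorem stmt10 (n : ℕ) (hn : 1 ≤ n) :
    (2 ≤ n → (loopyStarPos n).score =
      (((loopyStarPos (n - 1)).score).2, ((loopyStarPos (n - 1)).score).1 + 1)) ∧
    (Even (n + 1) →
      ((loopyStarPos n).score).1 = ((loopyStarPos n).score).2 + 2) ∧
    (Odd (n + 1) →
      ((loopyStarPos n).score).2 = ((loopyStarPos n).score).1 + 3) := by
  rw [loopy_score n, loopy_score (n - 1)]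
  refine ⟨?_, ?_, ?_⟩
  · intro h2
    simp only [sval, Prod.ext_iff]
    split_ifs <;> simp_all <;> omega
  · intro he
    rw [Nat.even_iff] at he
    simp only [sval]
    split_ifs <;> simp_all <;> omega
  · intro ho
    rw [Nat.odd_iff] at ho
    simp only [sval]
    split_ifs <;> simp_all <;> omega
end
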